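/- arXiv:2108.06801 — 2 statements merged into one kernel-verified Lean document; each statement's English description precedes it below -/
import Mathlib

section
/- Let G be a group equipped with a ternary operation t : G × G × G → G which is a homomorphism of groups (i.e. t(x₁*x₂, y₁*y₂, z₁*z₂) = t(x₁,y₁,z₁) * t(x₂,y₂,z₂) for all arguments) and satisfies the Mal'cev identities t(x,x,y) = y and t(x,y,y) = x for all x, y ∈ G. Then G is commutative. -/
/-! An Eckmann–Hilton argument: factoring `(a, 1, b)` as `(a, 1, 1) * (1, 1, b)` or as
`(1, 1, b) * (a, 1, 1)` and applying the homomorphism `t` shows `t a 1 b = a * b = b * a`. -/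

section MalcevHom

variable {M : Type*} [MulOneClass M] {t : M → M → M → M}

theorem malcev_apply_one_eq_mul
    (hhom : ∀ x₁ x₂ y₁ y₂ z₁ z₂ : M,
      t (x₁ * x₂) (y₁ * y₂) (z₁ * z₂) = t x₁ y₁ z₁ * t x₂ y₂ z₂)
    (h1 : ∀ x y : M, t x x y = y) (h2 : ∀ x y : M, t x y y = x) (a b : M) :
    t a 1 b = a * b := by
  simpa only [mul_one, one_mul, h1, h2] using hhom a 1 1 1 1 b

theorem malcev_apply_one_eq_mul_swap
    (hhom : ∀ x₁ x₂ y₁ y₂ z₁ z₂ : M,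
      t (x₁ * x₂) (y₁ * y₂) (z₁ * z₂) = t x₁ y₁ z₁ * t x₂ y₂ z₂)
    (h1 : ∀ x y : M, t x x y = y) (h2 : ∀ x y : M, t x y y = x) (a b : M) :
    t a 1 b = b * a := by
  simpa only [mul_one, one_mul, h1, h2] using hhom 1 a 1 1 b 1

end MalcevHom

/-- Every group object in herds is abelian: a group `G` with a ternary operation `t`
which is a group homomorphism `G³ → G` and satisfies the Mal'cev identities is commutative. -/
theorem stmt_0 {G : Type*} [Group G] (t : G → G → G → G)
    (hhom : ∀ x₁ x₂ y₁ y₂ z₁ z₂ : G,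
      t (x₁ * x₂) (y₁ * y₂) (z₁ * z₂) = t x₁ y₁ z₁ * t x₂ y₂ z₂)
    (h1 : ∀ x y : G, t x x y = y)
    (h2 : ∀ x y : G, t x y y = x) :
    ∀ a b : G, a * b = b * a := fun a b =>
  (malcev_apply_one_eq_mul hhom h1 h2 a b).symm.trans
    (malcev_apply_one_eq_mul_swap hhom h1 h2 a b)
end

section
/- Let A be a type, and let B and X be types each equipped with a ternary operation t_B and t_X satisfying the Mal'cev identities (t(x,x,y) = y and t(x,y,y) = x). Let p : B → X satisfy p(t_B(a,b,c)) = t_X(p(a), p(b), p(c)) for all a,b,c ∈ B, let s : X → B satisfy p ∘ s = id, and let q : A → X be any function. Then the function r : A × B → {(a,b) ∈ A × B | q(a) = p(b)} defined by r(a,b) = (a, t_B(s(q(a)), s(p(b)), b)) is well-defined and is a retraction of the inclusion {(a,b) | q(a) = p(b)} ↪ A × B, i.e. r restricted to the fiber product is the identity. -/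
theorem stmt_3_general {A B X : Type*} (tB : B → B → B → B) (tX : X → X → X → X)
    (hB1 : ∀ x y : B, tB x x y = y)
    (hX2 : ∀ x y : X, tX x y y = x)
    (p : B → X) (hp : ∀ a b c : B, p (tB a b c) = tX (p a) (p b) (p c))
    (s : X → B) (hs : ∀ x : X, p (s x) = x) (q : A → X) :
    (∀ (a : A) (b : B), q a = p (tB (s (q a)) (s (p b)) b)) ∧
    (∀ (a : A) (b : B), q a = p b → tB (s (q a)) (s (p b)) b = b) :=
  ⟨fun a b => by rw [hp, hs, hs, hX2], fun a b h => by rw [h, hB1]⟩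

/-- If `p : B → X` is a map of herds with a section `s`, then for any `q : A → X` the map
`r(a,b) = (a, t_B(s(q a), s(p b), b))` is a well-defined retraction of the inclusion of the
fiber product `A ×_X B` into `A × B`. -/
theorem stmt_3 {A B X : Type*} (tB : B → B → B → B) (tX : X → X → X → X)
    (hB1 : ∀ x y : B, tB x x y = y) (hB2 : ∀ x y : B, tB x y y = x)
    (hX1 : ∀ x y : X, tX x x y = y) (hX2 : ∀ x y : X, tX x y y = x)
    (p : B → X) (hp : ∀ a b c : B, p (tB a b c) = tX (p a) (p b) (p c))
    (s : X → B) (hs : ∀ x : X, p (s x) = x) (q : A → X) :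
    (∀ (a : A) (b : B), q a = p (tB (s (q a)) (s (p b)) b)) ∧
    (∀ (a : A) (b : B), q a = p b → tB (s (q a)) (s (p b)) b = b) :=
  stmt_3_general tB tX hB1 hX2 p hp s hs q
end
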